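/- arXiv:2504.16248 — 2 statements merged into one kernel-verified Lean document; each statement's English description precedes it below -/
import Mathlib

section
/- The ℚ-linear map β̃ of W defined by β̃: Ẽ₁^(ℓ) ↦ Ẽ₉^(3−ℓ), Ẽ₂^(ℓ) ↦ Ẽ₃^(3−ℓ), Ẽ₃^(ℓ) ↦ −Ẽ₁^(3−ℓ), Ẽ₄^(ℓ) ↦ Ẽ₈^(3−ℓ), Ẽ₅^(ℓ) ↦ −Ẽ₄^(3−ℓ), Ẽ₆^(ℓ) ↦ Ẽ₆^(3−ℓ), Ẽ₇^(ℓ) ↦ −Ẽ₅^(3−ℓ), Ẽ₈^(ℓ) ↦ Ẽ₇^(3−ℓ), Ẽ₉^(ℓ) ↦ −Ẽ₂^(3−ℓ), Ẽ₁₀^(ℓ) ↦ Ẽ₁₀^(ℓ), Ẽ₁₁^(ℓ) ↦ Ẽ₁₁^(ℓ), Ẽ₁₂^(ℓ) ↦ Ẽ₁₂^(3−ℓ) (for ℓ = 1, 2) preserves the bilinear form and maps the Niemeier lattice N onto itself, and has order 4. Moreover, the subgroup of the automorphism group of N generated by β̃ together with α̃¹ and α̃² has order 36 and is isomorphic to (ℤ/3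 × ℤ/3) ⋊ ℤ/4, where the generator of ℤ/4 acts on ℤ/3 × ℤ/3 by (a,b) ↦ (−b,a). -/
noncomputable section

abbrev JN : Type := Fin 12 × Fin 2
abbrev WN : Type := JN → ℚ

/-- The simple roots `Ẽ_j^(k)` (with `k : Fin 2` corresponding to `k+1 ∈ {1,2}`). -/
def Et (j : Fin 12) (k : Fin 2) : WN := Pi.single (j, k) 1

/-- Gram coefficients of the (positive definite) bilinear form on `W`. -/
def GN : JN → JN → ℚ := fun i j =>
  if i.1 = j.1 then (if i.2 = j.2 then 2 else -1) else 0

/-- The symmetric bilinear form on `W`. -/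
def BW (x y : WN) : ℚ := ∑ i : JN, ∑ j : JN, x i * GN i j * y j

/-- `Ẽ_j := Ẽ_j^(1) + 2·Ẽ_j^(2)`. -/
def EtV (j : Fin 12) : WN := Et j 0 + 2 • Et j 1

/-- The rows of the generating matrix of the glue code. -/
def glueMat : Fin 6 → Fin 12 → ℚ :=
  ![![0, 1, 1, 1, 1, 1, 1, 0, 0, 0, 0, 0],
    ![-1, 0, 1, -1, -1, 1, 0, 1, 0, 0, 0, 0],
    ![-1, 1, 0, 1, -1, -1, 0, 0, 1, 0, 0, 0],
    ![-1, -1, 1, 0, 1, -1, 0, 0, 0, 1, 0, 0],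
    ![-1, -1, -1, 1, 0, 1, 0, 0, 0, 0, 1, 0],
    ![-1, 1, -1, -1, 1, 0, 0, 0, 0, 0, 0, 1]]

/-- The glue vectors `w_i := (1/3)·∑_j a_{ij}·Ẽ_j`. -/
def wvec (i : Fin 6) : WN := (3 : ℚ)⁻¹ • ∑ j : Fin 12, glueMat i j • EtV j

/-- The Niemeier lattice `N` of type `A₂¹²`. -/
def NL : Submodule ℤ WN :=
  Submodule.span ℤ ({x | ∃ j k, x = Et j k} ∪ Set.range wvec)
abbrev F3 : Type := ZMod 3 × ZMod 3

/-- Translation by `(1,0)` on `𝔽₃²`. -/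
def T1 : Equiv.Perm F3 := Equiv.addLeft ((1, 0) : F3)

/-- Translation by `(0,1)` on `𝔽₃²`. -/
def T2 : Equiv.Perm F3 := Equiv.addLeft ((0, 1) : F3)

/-- The order-4 map `(a,b) ↦ (−b,a)` on `𝔽₃²`. -/
def JPerm : Equiv.Perm F3 :=
  ⟨fun p => (-p.2, p.1), fun p => (p.2, -p.1), fun p => by simp, fun p => by simp⟩

/-- A concrete model of the semidirect product `(ℤ/3 × ℤ/3) ⋊ ℤ/4`, where the generator of
`ℤ/4` acts on `ℤ/3 × ℤ/3` by `(a,b) ↦ (−b,a)`: the permutation group of `𝔽₃²` generated by the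
translations `T1`, `T2` (generating `ℤ/3 × ℤ/3`) and the order-4 map `JPerm`, whose conjugation
action on the translation subgroup is exactly `(a,b) ↦ (−b,a)`. -/
def ModelGroup : Subgroup (Equiv.Perm F3) := Subgroup.closure {T1, T2, JPerm}

/-- Index table for `α̃¹` (0-indexed). -/
def idx1 : Fin 12 → Fin 12 := ![3, 8, 0, 2, 7, 4, 1, 5, 6, 9, 10, 11]

/-- Sign table for `α̃¹`. -/
def sgn1 : Fin 12 → ℚ := ![1, -1, -1, -1, -1, -1, -1, 1, 1, 1, 1, 1]

/-- Index table for `α̃²`. -/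
def idx2 : Fin 12 → Fin 12 := ![8, 4, 1, 6, 2, 3, 5, 0, 7, 9, 10, 11]

/-- Index table for `β̃`. -/
def idxB : Fin 12 → Fin 12 := ![8, 2, 0, 7, 3, 5, 4, 6, 1, 9, 10, 11]

/-- Sign table for `β̃`. -/
def sgnB : Fin 12 → ℚ := ![1, 1, -1, 1, -1, 1, -1, 1, -1, 1, 1, 1]

/-- The superscript `ℓ ↦ 3−ℓ` swap performed by `β̃` (on all blocks except `Ẽ₁₀`, `Ẽ₁₁`). -/
def swB (j : Fin 12) (k : Fin 2) : Fin 2 := if j = 9 ∨ j = 10 then k else k.rev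


/-!
All three maps are monomial: they permute the 24 coordinates up to sign. They are therefore the
images of elements of the group of signed permutations `(JN → ℚˣ) ⋊ Perm JN`, which acts faithfully
on `W`, and every group-theoretic claim becomes a finite computation there.

`β̃` permutes the twelve `A₂` components up to sign, and on the components where it exchanges
`Ẽ_j^(1)` and `Ẽ_j^(2)` it acts on `A₂^* / A₂ ≅ ℤ/3` as `-1`. Hence it sends each glue vector `w_i`
to an integral combination of glue vectors modulo `A₂¹²`, so `β̃ N ⊆ N`, with equality because
`β̃` has finite order.

`α̃¹`, `α̃²`, `β̃` satisfy the defining relations `a³ = b³ = 1`, `ab = ba`, `c⁴ = 1`, `cac⁻¹ = b`,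
`cbc⁻¹ = a⁻¹` of `(ℤ/3 × ℤ/3) ⋊ ℤ/4`, so this group maps onto the subgroup they generate,
injectively because none of the 35 nontrivial normal forms `aⁱbʲcᵏ` is the identity. The
translations `T1`, `T2` and the rotation `JPerm` of `𝔽₃²` satisfy the same relations just as
faithfully.
-/

open Function Multiplicative

section ZModPowers

variable {G : Type*} [Group G] {n : ℕ}

def zmodPowersHom (n : ℕ) (g : G) (hg : g ^ n = 1) : Multiplicative (ZMod n) →* G :=
  AddMonoidHom.toMultiplicativeLeft
    (ZMod.lift n ⟨zmultiplesHom (Additive G) (Additive.ofMul g), by simp [← ofMul_pow, hg]⟩)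

lemma zmodPowersHom_ofAdd_natCast {g : G} (hg : g ^ n = 1) (k : ℕ) :
    zmodPowersHom n g hg (ofAdd (k : ZMod n)) = g ^ k := by
  rw [← Int.cast_natCast]
  change Additive.toMul (ZMod.lift n _ ((k : ℤ) : ZMod n)) = _
  rw [ZMod.lift_coe]
  simp

lemma zmodPowersHom_ofAdd_one {g : G} (hg : g ^ n = 1) : zmodPowersHom n g hg (ofAdd 1) = g := by
  simpa using zmodPowersHom_ofAdd_natCast hg 1

variable [NeZero n]

lemma ofAdd_one_pow_val (x : Multiplicative (ZMod n)) : ofAdd (1 : ZMod n) ^ (toAdd x).val = x := by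
  rw [← ofAdd_nsmul, nsmul_one, ZMod.natCast_zmod_val, ofAdd_toAdd]

lemma zmodPowersHom_apply {g : G} (hg : g ^ n = 1) (x : Multiplicative (ZMod n)) :
    zmodPowersHom n g hg x = g ^ (toAdd x).val := by
  rw [← zmodPowersHom_ofAdd_natCast hg, ZMod.natCast_zmod_val, ofAdd_toAdd]

lemma MonoidHom.ext_multiplicative_zmod {f f' : Multiplicative (ZMod n) →* G}
    (h : f (ofAdd 1) = f' (ofAdd 1)) : f = f' :=
  MonoidHom.ext fun x => by rw [← ofAdd_one_pow_val x, map_pow, map_pow, h]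

end ZModPowers

abbrev C3 := Multiplicative (ZMod 3)

def quarterTurn : MulAut (C3 × C3) :=
  MulEquiv.prodComm.trans ((MulEquiv.inv C3).prodCongr (MulEquiv.refl C3))

lemma quarterTurn_apply (x : C3 × C3) : quarterTurn x = (x.2⁻¹, x.1) := rfl

lemma quarterTurn_pow_four : quarterTurn ^ 4 = 1 := by
  ext x <;> simp [pow_succ, quarterTurn_apply]

abbrev QuarterTurnGroup :=
  (C3 × C3) ⋊[zmodPowersHom 4 quarterTurn quarterTurn_pow_four] Multiplicative (ZMod 4)

structure IsQuarterTurnTriple {H : Type*} [Group H] (a b c : H) : Prop where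
  pow_left : a ^ 3 = 1
  pow_mid : b ^ 3 = 1
  commute : Commute a b
  pow_right : c ^ 4 = 1
  conj_left : c * a * c⁻¹ = b
  conj_mid : c * b * c⁻¹ = a⁻¹

namespace IsQuarterTurnTriple

variable {H : Type*} [Group H] {a b c : H} (h : IsQuarterTurnTriple a b c)
include h

lemma map {K : Type*} [Group K] (f : H →* K) : IsQuarterTurnTriple (f a) (f b) (f c) where
  pow_left := by rw [← map_pow, h.pow_left, map_one]
  pow_mid := by rw [← map_pow, h.pow_mid, map_one]
  commute := h.commute.map f
  pow_right := by rw [← map_pow, h.pow_right, map_one]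
  conj_left := by rw [← map_inv, ← map_mul, ← map_mul, h.conj_left]
  conj_mid := by rw [← map_inv, ← map_inv, ← map_mul, ← map_mul, h.conj_mid]

def translationHom : C3 × C3 →* H :=
  (zmodPowersHom 3 a h.pow_left).noncommCoprod (zmodPowersHom 3 b h.pow_mid) fun x y => by
    simp only [zmodPowersHom_apply]
    exact h.commute.pow_pow _ _

lemma translationHom_apply (x : C3 × C3) :
    h.translationHom x = a ^ (toAdd x.1).val * b ^ (toAdd x.2).val := by
  simp [translationHom, MonoidHom.noncommCoprod_apply, zmodPowersHom_apply]

lemma translationHom_quarterTurn (x : C3 × C3) :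
    h.translationHom (quarterTurn x) = c * h.translationHom x * c⁻¹ := by
  set fa := zmodPowersHom 3 a h.pow_left
  set fb := zmodPowersHom 3 b h.pow_mid
  have hab : ∀ y, c * fa y * c⁻¹ = fb y := DFunLike.congr_fun
    (f := (MulAut.conj c).toMonoidHom.comp fa) <| MonoidHom.ext_multiplicative_zmod <| by
      simp [fa, fb, zmodPowersHom_ofAdd_one, h.conj_left]
  have hba : ∀ y, c * fb y * c⁻¹ = fa y⁻¹ := DFunLike.congr_fun
    (f := (MulAut.conj c).toMonoidHom.comp fb) (g := fa.comp invMonoidHom) <|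
      MonoidHom.ext_multiplicative_zmod <| by simp [fa, fb, zmodPowersHom_ofAdd_one, h.conj_mid]
  have hcomm : Commute (fa x.2⁻¹) (fb x.1) := by
    simp only [fa, fb, zmodPowersHom_apply]
    exact h.commute.pow_pow _ _
  calc h.translationHom (quarterTurn x) = fa x.2⁻¹ * fb x.1 := rfl
    _ = fb x.1 * fa x.2⁻¹ := hcomm.eq
    _ = (c * fa x.1 * c⁻¹) * (c * fb x.2 * c⁻¹) := by
      rw [hab, hba]
    _ = c * h.translationHom x * c⁻¹ := by simp [translationHom, fa, fb, mul_assoc]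

lemma translationHom_quarterTurn_pow (k : ℕ) (x : C3 × C3) :
    h.translationHom ((quarterTurn ^ k) x) = c ^ k * h.translationHom x * (c ^ k)⁻¹ := by
  induction k generalizing x with
  | zero => simp
  | succ k ih => rw [pow_succ, MulAut.mul_apply, ih, translationHom_quarterTurn]; group

def lift : QuarterTurnGroup →* H :=
  SemidirectProduct.lift h.translationHom (zmodPowersHom 4 c h.pow_right) fun g => by
    ext x
    simp only [MonoidHom.comp_apply, MulEquiv.coe_toMonoidHom, MulAut.conj_apply,
      zmodPowersHom_apply]
    exact h.translationHom_quarterTurn_pow _ x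

lemma lift_apply (x : QuarterTurnGroup) :
    h.lift x = a ^ (toAdd x.left.1).val * b ^ (toAdd x.left.2).val * c ^ (toAdd x.right).val := by
  change h.translationHom x.left * zmodPowersHom 4 c h.pow_right x.right = _
  rw [translationHom_apply, zmodPowersHom_apply]

lemma range_lift : h.lift.range = Subgroup.closure {a, b, c} := by
  apply le_antisymm
  · rintro _ ⟨x, rfl⟩
    rw [lift_apply]
    have hmem {y : H} (hy : y ∈ ({a, b, c} : Set H)) (k : ℕ) : y ^ k ∈ Subgroup.closure {a, b, c} :=
      pow_mem (Subgroup.subset_closure hy) k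
    exact mul_mem (mul_mem (hmem (by simp) _) (hmem (by simp) _)) (hmem (by simp) _)
  · rw [Subgroup.closure_le]
    rintro _ (rfl | rfl | rfl)
    · exact ⟨.inl (ofAdd 1, 1), by simp [lift_apply, ZMod.val_one_eq_one_mod]⟩
    · exact ⟨.inl (1, ofAdd 1), by simp [lift_apply, ZMod.val_one_eq_one_mod]⟩
    · exact ⟨.inr (ofAdd 1), by simp [lift_apply, ZMod.val_one_eq_one_mod]⟩

variable (hfaith : ∀ (i j : ZMod 3) (k : ZMod 4), a ^ i.val * b ^ j.val * c ^ k.val = 1 →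
  i = 0 ∧ j = 0 ∧ k = 0)
include hfaith

lemma lift_injective : Injective h.lift := by
  refine (injective_iff_map_eq_one _).2 fun x hx => ?_
  obtain ⟨hi, hj, hk⟩ := hfaith _ _ _ ((h.lift_apply x).symm.trans hx)
  exact SemidirectProduct.ext (Prod.ext hi hj) hk

def closureEquiv : Subgroup.closure {a, b, c} ≃* QuarterTurnGroup :=
  (MulEquiv.subgroupCongr h.range_lift.symm).trans
    (MonoidHom.ofInjective (h.lift_injective hfaith)).symm

lemma orderOf_right : orderOf c = 4 := by
  have hc : h.lift (.inr (ofAdd 1)) = c := by simp [lift_apply, ZMod.val_one_eq_one_mod]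
  rw [← hc, orderOf_injective _ (h.lift_injective hfaith),
    orderOf_injective _ SemidirectProduct.inr_injective, orderOf_ofAdd_eq_addOrderOf,
    ZMod.addOrderOf_one]

end IsQuarterTurnTriple

lemma card_quarterTurnGroup : Nat.card QuarterTurnGroup = 36 := by
  simp [SemidirectProduct.card, Nat.card_eq_fintype_card]

section Monomial

attribute [local instance] arrowMulDistribMulAction in
def permArrowMulAut (ι M : Type*) [Monoid M] : Equiv.Perm ι →* MulAut (ι → M) :=
  MulDistribMulAction.toMulAut _ _

abbrev MonomialGroup (R ι : Type*) [Monoid R] := (ι → Rˣ) ⋊[permArrowMulAut ι Rˣ] Equiv.Perm ι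

instance {N G : Type*} [Group N] [Group G] {φ : G →* MulAut N} [DecidableEq N] [DecidableEq G] :
    DecidableEq (N ⋊[φ] G) :=
  SemidirectProduct.equivProd.decidableEq

variable (R : Type*) {ι : Type*} [CommSemiring R]

def diagLinearEquiv : (ι → Rˣ) →* ((ι → R) ≃ₗ[R] (ι → R)) where
  toFun s := LinearEquiv.piCongrRight fun i => DistribMulAction.toLinearEquiv R R (s i)
  map_one' := by ext; simp
  map_mul' s t := by ext; simp [mul_smul]

def permLinearEquiv : Equiv.Perm ι →* ((ι → R) ≃ₗ[R] (ι → R)) where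
  toFun σ := LinearEquiv.funCongrLeft R R σ⁻¹
  map_one' := rfl
  map_mul' _ _ := rfl

namespace MonomialGroup

def toLinearEquiv : MonomialGroup R ι →* ((ι → R) ≃ₗ[R] (ι → R)) :=
  SemidirectProduct.lift (diagLinearEquiv R) (permLinearEquiv R) fun σ => by
    ext s x i
    change s (σ⁻¹ i) • x i = s (σ⁻¹ i) • x (σ (σ⁻¹ i))
    simp

variable {R}

lemma toLinearEquiv_apply (m : MonomialGroup R ι) (x : ι → R) (i : ι) :
    toLinearEquiv R m x i = m.left i • x (m.right⁻¹ i) := rfl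

lemma toLinearEquiv_single [DecidableEq ι] (m : MonomialGroup R ι) (p : ι) :
    toLinearEquiv R m (Pi.single p 1) = (m.left (m.right p) : R) • Pi.single (m.right p) 1 := by
  ext i
  by_cases hi : i = m.right p
  · subst hi
    simp [toLinearEquiv_apply, Units.smul_def]
  · have hne : m.right⁻¹ i ≠ p := fun h => hi (by simp [← h])
    rw [toLinearEquiv_apply, Pi.single_eq_of_ne hne, smul_zero, Pi.smul_apply,
      Pi.single_eq_of_ne hi, smul_zero]

lemma toLinearEquiv_injective [Nontrivial R] : Injective (toLinearEquiv R (ι := ι)) := by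
  classical
  refine (injective_iff_map_eq_one _).2 fun m hm => ?_
  have hfix (p : ι) : (m.left p : R) * (Pi.single p 1 : ι → R) (m.right⁻¹ p) = 1 := by
    simpa [toLinearEquiv_apply, Units.smul_def] using
      congr_fun (LinearEquiv.congr_fun hm (Pi.single p 1)) p
  have hright (p : ι) : m.right⁻¹ p = p := by
    by_contra hp
    have := hfix p
    rw [Pi.single_eq_of_ne hp, mul_zero] at this
    exact zero_ne_one this
  have hleft (p : ι) : m.left p = 1 := by
    simpa [hright, Units.val_eq_one] using hfix p
  exact SemidirectProduct.ext (funext hleft) (inv_eq_one.mp (Equiv.ext hright))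

lemma sum_sum_toLinearEquiv [Fintype ι] (G : ι → ι → R) (m : MonomialGroup R ι)
    (hG : ∀ p q, (m.left (m.right p) : R) * m.left (m.right q) * G (m.right p) (m.right q) =
      G p q) (x y : ι → R) :
    ∑ i, ∑ j, toLinearEquiv R m x i * G i j * toLinearEquiv R m y j =
      ∑ i, ∑ j, x i * G i j * y j := by
  rw [← Equiv.sum_comp m.right]
  refine Finset.sum_congr rfl fun p _ => ?_
  rw [← Equiv.sum_comp m.right]
  refine Finset.sum_congr rfl fun q _ => ?_
  simp only [toLinearEquiv_apply, Equiv.Perm.coe_inv, Equiv.symm_apply_apply, Units.smul_def]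
  rw [← hG p q]
  ring

end MonomialGroup

end Monomial

lemma Set.image_smul_eq_of_mapsTo {G α : Type*} [Group G] [MulAction G α] {g : G}
    (hg : IsOfFinOrder g) {s : Set α} (hs : MapsTo (g • ·) s s) : (g • ·) '' s = s := by
  refine hs.image_subset.antisymm fun x hx => ?_
  obtain ⟨n, hn, hgn⟩ := isOfFinOrder_iff_pow_eq_one.1 hg
  refine ⟨g ^ (n - 1) • x, ?_, ?_⟩
  · simpa only [smul_iterate] using hs.iterate (n - 1) hx
  · change g • g ^ (n - 1) • x = x
    rw [smul_smul, ← pow_succ', Nat.sub_add_cancel hn, hgn, one_smul]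

lemma intCast_mem_NL (z : JN → ℤ) : (fun p => (z p : ℚ)) ∈ NL := by
  have hz : (fun p => (z p : ℚ)) = ∑ p, z p • Et p.1 p.2 := by
    ext q
    simp [Et, Finset.sum_apply, Pi.single_apply]
  rw [hz]
  exact Submodule.sum_mem _ fun p _ =>
    Submodule.smul_mem _ _ (Submodule.subset_span (.inl ⟨_, _, rfl⟩))

lemma mem_NL_of_den_eq_one {x : WN} (hx : ∀ p, (x p).den = 1) : x ∈ NL := by
  convert intCast_mem_NL fun p => (x p).num
  exact (Rat.coe_int_num_of_den_eq_one (hx _)).symm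

lemma mem_NL_of_den_sub_eq_one {x : WN} (c : Fin 6 → ℤ)
    (hx : ∀ p, (x p - ∑ t, (c t : ℚ) * wvec t p).den = 1) : x ∈ NL := by
  have hglue : ∑ t, c t • wvec t ∈ NL :=
    Submodule.sum_mem _ fun t _ => Submodule.smul_mem _ _ (Submodule.subset_span (.inr ⟨t, rfl⟩))
  convert add_mem (mem_NL_of_den_eq_one (x := x - ∑ t, c t • wvec t) ?_) hglue
  · simp
  · intro p
    simpa [Finset.sum_apply] using hx p

-- Components are 0-indexed: `j : Fin 12` stands for `Ẽ_{j+1}`.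
def alpha1 : MonomialGroup ℚ JN :=
  .inr ((c[0, 3, 2] * c[1, 8, 6] * c[4, 7, 5] : Equiv.Perm (Fin 12)).prodCongr (Equiv.refl _)) *
    .inl fun p => Units.mk0 (sgn1 p.1) (by revert p; decide)

def alpha2 : MonomialGroup ℚ JN :=
  .inr ((c[0, 8, 7] * c[1, 4, 2] * c[3, 6, 5] : Equiv.Perm (Fin 12)).prodCongr (Equiv.refl _))

def beta : MonomialGroup ℚ JN :=
  .inr ((c[0, 8, 1, 2] * c[3, 7, 6, 4] : Equiv.Perm (Fin 12)).prodShear fun j =>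
      if j = 9 ∨ j = 10 then Equiv.refl _ else Fin.revPerm) *
    .inl fun p => Units.mk0 (sgnB p.1) (by revert p; decide)

open MonomialGroup

lemma toLinearEquiv_Et {m : MonomialGroup ℚ JN} {j j' : Fin 12} {k k' : Fin 2} {r : ℚ}
    (hright : m.right (j, k) = (j', k')) (hleft : (m.left (j', k') : ℚ) = r) :
    toLinearEquiv ℚ m (Et j k) = r • Et j' k' := by
  rw [Et, toLinearEquiv_single, hright, hleft, Et]

-- `+kernel`: elaboration-time reduction gets stuck on `ℚ` arithmetic.
lemma alpha1_Et (j : Fin 12) (k : Fin 2) :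
    toLinearEquiv ℚ alpha1 (Et j k) = sgn1 j • Et (idx1 j) k :=
  toLinearEquiv_Et (by revert j k; decide +kernel) (by revert j k; decide +kernel)

lemma alpha2_Et (j : Fin 12) (k : Fin 2) : toLinearEquiv ℚ alpha2 (Et j k) = Et (idx2 j) k := by
  rw [toLinearEquiv_Et (j' := idx2 j) (k' := k) (r := 1) (by revert j k; decide +kernel) rfl,
    one_smul]

lemma beta_Et (j : Fin 12) (k : Fin 2) :
    toLinearEquiv ℚ beta (Et j k) = sgnB j • Et (idxB j) (swB j k) :=
  toLinearEquiv_Et (by revert j k; decide +kernel) (by revert j k; decide +kernel)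

lemma BW_beta (x y : WN) : BW (toLinearEquiv ℚ beta x) (toLinearEquiv ℚ beta y) = BW x y :=
  sum_sum_toLinearEquiv GN beta (by decide +kernel) x y

-- `β̃ w_i ≡ ∑ₜ c_{it} w_t` modulo `A₂¹²`: row `i` expands the image under `β̃` of the `i`-th
-- generator of the glue code in the six generators, over `𝔽₃`.
def betaGlueCoeff : Fin 6 → Fin 6 → ℤ :=
  ![![0, 2, 0, 0, 0, 0],
    ![2, 1, 1, 0, 0, 0],
    ![0, 2, 1, 0, 0, 0],
    ![0, 0, 1, 1, 0, 0],
    ![0, 2, 1, 0, 1, 0],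
    ![0, 1, 1, 0, 0, 2]]

lemma beta_mapsTo_NL : Set.MapsTo (toLinearEquiv ℚ beta) NL NL := by
  have hgen : NL.map ((toLinearEquiv ℚ beta).toLinearMap.restrictScalars ℤ) ≤ NL := by
    refine (Submodule.map_span_le _ _ _).2 ?_
    rintro _ (⟨j, k, rfl⟩ | ⟨i, rfl⟩)
    · exact mem_NL_of_den_eq_one (by revert j k; decide +kernel)
    · exact mem_NL_of_den_sub_eq_one (betaGlueCoeff i) (by revert i; decide +kernel)
  exact fun x hx => hgen ⟨x, hx, rfl⟩

lemma isQuarterTurnTriple_alpha_beta : IsQuarterTurnTriple alpha1 alpha2 beta where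
  pow_left := by decide +kernel
  pow_mid := by decide +kernel
  commute := show alpha1 * alpha2 = alpha2 * alpha1 by decide +kernel
  pow_right := by decide +kernel
  conj_left := by decide +kernel
  conj_mid := by decide +kernel

lemma alpha_beta_faithful : ∀ (i j : ZMod 3) (k : ZMod 4),
    alpha1 ^ i.val * alpha2 ^ j.val * beta ^ k.val = 1 → i = 0 ∧ j = 0 ∧ k = 0 := by
  decide +kernel

lemma toLinearEquiv_alpha_beta_faithful : ∀ (i j : ZMod 3) (k : ZMod 4),
    toLinearEquiv ℚ alpha1 ^ i.val * toLinearEquiv ℚ alpha2 ^ j.val *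
      toLinearEquiv ℚ beta ^ k.val = 1 → i = 0 ∧ j = 0 ∧ k = 0 := fun i j k h =>
  alpha_beta_faithful i j k <| toLinearEquiv_injective <| by
    simpa only [map_mul, map_pow, map_one] using h

lemma isQuarterTurnTriple_model : IsQuarterTurnTriple T1 T2 JPerm where
  pow_left := by decide
  pow_mid := by decide
  commute := show T1 * T2 = T2 * T1 by decide
  pow_right := by decide
  conj_left := by decide
  conj_mid := by decide

lemma model_faithful : ∀ (i j : ZMod 3) (k : ZMod 4),
    T1 ^ i.val * T2 ^ j.val * JPerm ^ k.val = 1 → i = 0 ∧ j = 0 ∧ k = 0 := by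
  decide

theorem statement14 :
    ∃ A1 A2 Bt : WN ≃ₗ[ℚ] WN,
      -- defining values of α̃¹, α̃² and β̃ on the basis vectors Ẽ_j^(ℓ)
      (∀ (j : Fin 12) (k : Fin 2), A1 (Et j k) = sgn1 j • Et (idx1 j) k) ∧
      (∀ (j : Fin 12) (k : Fin 2), A2 (Et j k) = Et (idx2 j) k) ∧
      (∀ (j : Fin 12) (k : Fin 2), Bt (Et j k) = sgnB j • Et (idxB j) (swB j k)) ∧
      -- β̃ preserves the bilinear form and maps N onto itself, and has order 4
      (∀ x y : WN, BW (Bt x) (Bt y) = BW x y) ∧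
      ((fun v => Bt v) '' NL = NL) ∧
      orderOf Bt = 4 ∧
      -- the subgroup of Aut(N) generated by β̃, α̃¹, α̃² has order 36
      Nat.card (Subgroup.closure {A1, A2, Bt} : Subgroup (WN ≃ₗ[ℚ] WN)) = 36 ∧
      -- and is isomorphic to (ℤ/3 × ℤ/3) ⋊ ℤ/4 with the generator of ℤ/4
      -- acting by (a,b) ↦ (−b,a)
      Nonempty ((Subgroup.closure {A1, A2, Bt} : Subgroup (WN ≃ₗ[ℚ] WN)) ≃* ModelGroup) := by
  have hL := isQuarterTurnTriple_alpha_beta.map (toLinearEquiv ℚ)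
  have hiso := hL.closureEquiv toLinearEquiv_alpha_beta_faithful
  have horder : orderOf (toLinearEquiv ℚ beta) = 4 :=
    hL.orderOf_right toLinearEquiv_alpha_beta_faithful
  refine ⟨_, _, _, alpha1_Et, alpha2_Et, beta_Et, BW_beta, ?_, horder,
    (Nat.card_congr hiso.toEquiv).trans card_quarterTurnGroup,
    ⟨hiso.trans (isQuarterTurnTriple_model.closureEquiv model_faithful).symm⟩⟩
  exact Set.image_smul_eq_of_mapsTo (orderOf_pos_iff.1 (by rw [horder]; norm_num)) beta_mapsTo_NL
end
end

section
/- The permutations σ₁ = (1,4,3)(2,9,7)(5,8,6), σ₂ = (1,9,8)(2,5,3)(4,7,6), and σ₃ = (1,9,2,3)(4,8,7,5) of {1,…,12} all lie in the Mathieu group M₁₂, and the subgroup of S₁₂ they generate has order 36 and is isomorphic to (ℤ/3 × ℤ/3) ⋊ ℤ/4, where the generator of ℤ/4 acts on ℤ/3 × ℤ/3 by (a,b) ↦ (−b,a). -/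
set_option maxRecDepth 40000
set_option maxHeartbeats 1000000


/-- We work with permutations of `{1,…,12}`, realized inside `Equiv.Perm (Fin 13)`
(the element `0` is unused and fixed by all permutations considered). -/
abbrev X12 : Type := Fin 13

/-- The generator `A = (1,6,5,4,10,9,12,7,11,3,2)` of `M₁₂`. -/
def pA : Equiv.Perm X12 := List.formPerm [1, 6, 5, 4, 10, 9, 12, 7, 11, 3, 2]

/-- The generator `B = (1,4,6,12,2)(3,11,9,7,5)` of `M₁₂`. -/
def pB : Equiv.Perm X12 := List.formPerm [1, 4, 6, 12, 2] * List.formPerm [3, 11, 9, 7, 5]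

/-- The generator `C = (1,7)(2,5)(3,12)(4,9)(6,11)(8,10)` of `M₁₂`. -/
def pC : Equiv.Perm X12 :=
  List.formPerm [1, 7] * List.formPerm [2, 5] * List.formPerm [3, 12] *
    List.formPerm [4, 9] * List.formPerm [6, 11] * List.formPerm [8, 10]

/-- The generator `D = (1,2)(3,5)(4,12)(7,11)` of `M₁₂`. -/
def pD : Equiv.Perm X12 :=
  List.formPerm [1, 2] * List.formPerm [3, 5] * List.formPerm [4, 12] * List.formPerm [7, 11]

/-- The Mathieu group `M₁₂`. -/
def M12 : Subgroup (Equiv.Perm X12) := Subgroup.closure {pA, pB, pC, pD}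

/-- `σ₁ = (1,4,3)(2,9,7)(5,8,6)`. -/
def s1 : Equiv.Perm X12 :=
  List.formPerm [1, 4, 3] * List.formPerm [2, 9, 7] * List.formPerm [5, 8, 6]

/-- `σ₂ = (1,9,8)(2,5,3)(4,7,6)`. -/
def s2 : Equiv.Perm X12 :=
  List.formPerm [1, 9, 8] * List.formPerm [2, 5, 3] * List.formPerm [4, 7, 6]

/-- `σ₃ = (1,9,2,3)(4,8,7,5)`. -/
def s3 : Equiv.Perm X12 := List.formPerm [1, 9, 2, 3] * List.formPerm [4, 8, 7, 5]

/-! ### Auxiliary material -/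

/-- The labeling of the nine moved points by `𝔽₃²`, together with the four fixed points. -/
def eqvFun : F3 ⊕ Fin 4 → X12
  | .inl p =>
    if p = (0,0) then 6 else if p = (0,1) then 4 else if p = (0,2) then 7 else
    if p = (1,0) then 5 else if p = (1,1) then 3 else if p = (1,2) then 2 else
    if p = (2,0) then 8 else if p = (2,1) then 1 else 9
  | .inr k => if k = 0 then 0 else if k = 1 then 10 else if k = 2 then 11 else 12

def eqvInv : X12 → F3 ⊕ Fin 4 := fun x =>
  if x = 6 then .inl (0,0) else if x = 4 then .inl (0,1) else if x = 7 then .inl (0,2) else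
  if x = 5 then .inl (1,0) else if x = 3 then .inl (1,1) else if x = 2 then .inl (1,2) else
  if x = 8 then .inl (2,0) else if x = 1 then .inl (2,1) else if x = 9 then .inl (2,2) else
  if x = 0 then .inr 0 else if x = 10 then .inr 1 else if x = 11 then .inr 2 else .inr 3

def eqv : (F3 ⊕ Fin 4) ≃ X12 :=
  ⟨eqvFun, eqvInv, by decide, by decide⟩

/-- Extension of a permutation of `𝔽₃²` to a permutation of `X12` fixing the other four
points, as a group homomorphism. -/
def embHom : Equiv.Perm F3 →* Equiv.Perm X12 where
  toFun σ := eqv.permCongr (Equiv.Perm.sumCongrHom F3 (Fin 4) (σ, 1))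
  map_one' := by
    ext x
    simp [Equiv.permCongr_apply, Equiv.Perm.sumCongrHom]
  map_mul' a b := by
    ext x
    simp [Equiv.permCongr_apply, Equiv.Perm.sumCongrHom, Equiv.Perm.mul_apply]

lemma embHom_injective : Function.Injective embHom := by
  intro σ τ h
  have h2 : Equiv.Perm.sumCongrHom F3 (Fin 4) (σ, 1) =
      Equiv.Perm.sumCongrHom F3 (Fin 4) (τ, 1) := eqv.permCongr.injective h
  have h3 := Equiv.Perm.sumCongrHom_injective h2
  exact congrArg Prod.fst h3

lemma embHom_T1 : embHom T1 = s1 := by decide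
lemma embHom_T2 : embHom T2 = s2 := by decide
lemma embHom_T3 : embHom JPerm = s3 := by decide

def el0 : Equiv.Perm F3 :=
  ⟨fun p => if p = (0,0) then (0,0) else if p = (0,1) then (0,1) else if p = (0,2) then (0,2) else if p = (1,0) then (1,0) else if p = (1,1) then (1,1) else if p = (1,2) then (1,2) else if p = (2,0) then (2,0) else if p = (2,1) then (2,1) else (2,2),
   fun p => if p = (0,0) then (0,0) else if p = (0,1) then (0,1) else if p = (0,2) then (0,2) else if p = (1,0) then (1,0) else if p = (1,1) then (1,1) else if p = (1,2) then (1,2) else if p = (2,0) then (2,0) else if p = (2,1) then (2,1) else (2,2), by decide, by decide⟩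

def el1 : Equiv.Perm F3 :=
  ⟨fun p => if p = (0,0) then (0,0) else if p = (0,1) then (2,0) else if p = (0,2) then (1,0) else if p = (1,0) then (0,1) else if p = (1,1) then (2,1) else if p = (1,2) then (1,1) else if p = (2,0) then (0,2) else if p = (2,1) then (2,2) else (1,2),
   fun p => if p = (0,0) then (0,0) else if p = (0,1) then (1,0) else if p = (0,2) then (2,0) else if p = (1,0) then (0,2) else if p = (1,1) then (1,2) else if p = (1,2) then (2,2) else if p = (2,0) then (0,1) else if p = (2,1) then (1,1) else (2,1), by decide, by decide⟩

def el2 : Equiv.Perm F3 :=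
  ⟨fun p => if p = (0,0) then (0,0) else if p = (0,1) then (0,2) else if p = (0,2) then (0,1) else if p = (1,0) then (2,0) else if p = (1,1) then (2,2) else if p = (1,2) then (2,1) else if p = (2,0) then (1,0) else if p = (2,1) then (1,2) else (1,1),
   fun p => if p = (0,0) then (0,0) else if p = (0,1) then (0,2) else if p = (0,2) then (0,1) else if p = (1,0) then (2,0) else if p = (1,1) then (2,2) else if p = (1,2) then (2,1) else if p = (2,0) then (1,0) else if p = (2,1) then (1,2) else (1,1), by decide, by decide⟩

def el3 : Equiv.Perm F3 :=
  ⟨fun p => if p = (0,0) then (0,0) else if p = (0,1) then (1,0) else if p = (0,2) then (2,0) else if p = (1,0) then (0,2) else if p = (1,1) then (1,2) else if p = (1,2) then (2,2) else if p = (2,0) then (0,1) else if p = (2,1) then (1,1) else (2,1),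
   fun p => if p = (0,0) then (0,0) else if p = (0,1) then (2,0) else if p = (0,2) then (1,0) else if p = (1,0) then (0,1) else if p = (1,1) then (2,1) else if p = (1,2) then (1,1) else if p = (2,0) then (0,2) else if p = (2,1) then (2,2) else (1,2), by decide, by decide⟩

def el4 : Equiv.Perm F3 :=
  ⟨fun p => if p = (0,0) then (0,1) else if p = (0,1) then (0,2) else if p = (0,2) then (0,0) else if p = (1,0) then (1,1) else if p = (1,1) then (1,2) else if p = (1,2) then (1,0) else if p = (2,0) then (2,1) else if p = (2,1) then (2,2) else (2,0),
   fun p => if p = (0,0) then (0,2) else if p = (0,1) then (0,0) else if p = (0,2) then (0,1) else if p = (1,0) then (1,2) else if p = (1,1) then (1,0) else if p = (1,2) then (1,1) else if p = (2,0) then (2,2) else if p = (2,1) then (2,0) else (2,1), by decide, by decide⟩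

def el5 : Equiv.Perm F3 :=
  ⟨fun p => if p = (0,0) then (0,1) else if p = (0,1) then (2,1) else if p = (0,2) then (1,1) else if p = (1,0) then (0,2) else if p = (1,1) then (2,2) else if p = (1,2) then (1,2) else if p = (2,0) then (0,0) else if p = (2,1) then (2,0) else (1,0),
   fun p => if p = (0,0) then (2,0) else if p = (0,1) then (0,0) else if p = (0,2) then (1,0) else if p = (1,0) then (2,2) else if p = (1,1) then (0,2) else if p = (1,2) then (1,2) else if p = (2,0) then (2,1) else if p = (2,1) then (0,1) else (1,1), by decide, by decide⟩

def el6 : Equiv.Perm F3 :=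
  ⟨fun p => if p = (0,0) then (0,1) else if p = (0,1) then (0,0) else if p = (0,2) then (0,2) else if p = (1,0) then (2,1) else if p = (1,1) then (2,0) else if p = (1,2) then (2,2) else if p = (2,0) then (1,1) else if p = (2,1) then (1,0) else (1,2),
   fun p => if p = (0,0) then (0,1) else if p = (0,1) then (0,0) else if p = (0,2) then (0,2) else if p = (1,0) then (2,1) else if p = (1,1) then (2,0) else if p = (1,2) then (2,2) else if p = (2,0) then (1,1) else if p = (2,1) then (1,0) else (1,2), by decide, by decide⟩

def el7 : Equiv.Perm F3 :=
  ⟨fun p => if p = (0,0) then (0,1) else if p = (0,1) then (1,1) else if p = (0,2) then (2,1) else if p = (1,0) then (0,0) else if p = (1,1) then (1,0) else if p = (1,2) then (2,0) else if p = (2,0) then (0,2) else if p = (2,1) then (1,2) else (2,2),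
   fun p => if p = (0,0) then (1,0) else if p = (0,1) then (0,0) else if p = (0,2) then (2,0) else if p = (1,0) then (1,1) else if p = (1,1) then (0,1) else if p = (1,2) then (2,1) else if p = (2,0) then (1,2) else if p = (2,1) then (0,2) else (2,2), by decide, by decide⟩

def el8 : Equiv.Perm F3 :=
  ⟨fun p => if p = (0,0) then (0,2) else if p = (0,1) then (0,0) else if p = (0,2) then (0,1) else if p = (1,0) then (1,2) else if p = (1,1) then (1,0) else if p = (1,2) then (1,1) else if p = (2,0) then (2,2) else if p = (2,1) then (2,0) else (2,1),
   fun p => if p = (0,0) then (0,1) else if p = (0,1) then (0,2) else if p = (0,2) then (0,0) else if p = (1,0) then (1,1) else if p = (1,1) then (1,2) else if p = (1,2) then (1,0) else if p = (2,0) then (2,1) else if p = (2,1) then (2,2) else (2,0), by decide, by decide⟩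

def el9 : Equiv.Perm F3 :=
  ⟨fun p => if p = (0,0) then (0,2) else if p = (0,1) then (2,2) else if p = (0,2) then (1,2) else if p = (1,0) then (0,0) else if p = (1,1) then (2,0) else if p = (1,2) then (1,0) else if p = (2,0) then (0,1) else if p = (2,1) then (2,1) else (1,1),
   fun p => if p = (0,0) then (1,0) else if p = (0,1) then (2,0) else if p = (0,2) then (0,0) else if p = (1,0) then (1,2) else if p = (1,1) then (2,2) else if p = (1,2) then (0,2) else if p = (2,0) then (1,1) else if p = (2,1) then (2,1) else (0,1), by decide, by decide⟩

def el10 : Equiv.Perm F3 :=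
  ⟨fun p => if p = (0,0) then (0,2) else if p = (0,1) then (0,1) else if p = (0,2) then (0,0) else if p = (1,0) then (2,2) else if p = (1,1) then (2,1) else if p = (1,2) then (2,0) else if p = (2,0) then (1,2) else if p = (2,1) then (1,1) else (1,0),
   fun p => if p = (0,0) then (0,2) else if p = (0,1) then (0,1) else if p = (0,2) then (0,0) else if p = (1,0) then (2,2) else if p = (1,1) then (2,1) else if p = (1,2) then (2,0) else if p = (2,0) then (1,2) else if p = (2,1) then (1,1) else (1,0), by decide, by decide⟩

def el11 : Equiv.Perm F3 :=
  ⟨fun p => if p = (0,0) then (0,2) else if p = (0,1) then (1,2) else if p = (0,2) then (2,2) else if p = (1,0) then (0,1) else if p = (1,1) then (1,1) else if p = (1,2) then (2,1) else if p = (2,0) then (0,0) else if p = (2,1) then (1,0) else (2,0),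
   fun p => if p = (0,0) then (2,0) else if p = (0,1) then (1,0) else if p = (0,2) then (0,0) else if p = (1,0) then (2,1) else if p = (1,1) then (1,1) else if p = (1,2) then (0,1) else if p = (2,0) then (2,2) else if p = (2,1) then (1,2) else (0,2), by decide, by decide⟩

def el12 : Equiv.Perm F3 :=
  ⟨fun p => if p = (0,0) then (1,0) else if p = (0,1) then (1,1) else if p = (0,2) then (1,2) else if p = (1,0) then (2,0) else if p = (1,1) then (2,1) else if p = (1,2) then (2,2) else if p = (2,0) then (0,0) else if p = (2,1) then (0,1) else (0,2),
   fun p => if p = (0,0) then (2,0) else if p = (0,1) then (2,1) else if p = (0,2) then (2,2) else if p = (1,0) then (0,0) else if p = (1,1) then (0,1) else if p = (1,2) then (0,2) else if p = (2,0) then (1,0) else if p = (2,1) then (1,1) else (1,2), by decide, by decide⟩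

def el13 : Equiv.Perm F3 :=
  ⟨fun p => if p = (0,0) then (1,0) else if p = (0,1) then (0,0) else if p = (0,2) then (2,0) else if p = (1,0) then (1,1) else if p = (1,1) then (0,1) else if p = (1,2) then (2,1) else if p = (2,0) then (1,2) else if p = (2,1) then (0,2) else (2,2),
   fun p => if p = (0,0) then (0,1) else if p = (0,1) then (1,1) else if p = (0,2) then (2,1) else if p = (1,0) then (0,0) else if p = (1,1) then (1,0) else if p = (1,2) then (2,0) else if p = (2,0) then (0,2) else if p = (2,1) then (1,2) else (2,2), by decide, by decide⟩

def el14 : Equiv.Perm F3 :=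
  ⟨fun p => if p = (0,0) then (1,0) else if p = (0,1) then (1,2) else if p = (0,2) then (1,1) else if p = (1,0) then (0,0) else if p = (1,1) then (0,2) else if p = (1,2) then (0,1) else if p = (2,0) then (2,0) else if p = (2,1) then (2,2) else (2,1),
   fun p => if p = (0,0) then (1,0) else if p = (0,1) then (1,2) else if p = (0,2) then (1,1) else if p = (1,0) then (0,0) else if p = (1,1) then (0,2) else if p = (1,2) then (0,1) else if p = (2,0) then (2,0) else if p = (2,1) then (2,2) else (2,1), by decide, by decide⟩

def el15 : Equiv.Perm F3 :=
  ⟨fun p => if p = (0,0) then (1,0) else if p = (0,1) then (2,0) else if p = (0,2) then (0,0) else if p = (1,0) then (1,2) else if p = (1,1) then (2,2) else if p = (1,2) then (0,2) else if p = (2,0) then (1,1) else if p = (2,1) then (2,1) else (0,1),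
   fun p => if p = (0,0) then (0,2) else if p = (0,1) then (2,2) else if p = (0,2) then (1,2) else if p = (1,0) then (0,0) else if p = (1,1) then (2,0) else if p = (1,2) then (1,0) else if p = (2,0) then (0,1) else if p = (2,1) then (2,1) else (1,1), by decide, by decide⟩

def el16 : Equiv.Perm F3 :=
  ⟨fun p => if p = (0,0) then (1,1) else if p = (0,1) then (1,2) else if p = (0,2) then (1,0) else if p = (1,0) then (2,1) else if p = (1,1) then (2,2) else if p = (1,2) then (2,0) else if p = (2,0) then (0,1) else if p = (2,1) then (0,2) else (0,0),
   fun p => if p = (0,0) then (2,2) else if p = (0,1) then (2,0) else if p = (0,2) then (2,1) else if p = (1,0) then (0,2) else if p = (1,1) then (0,0) else if p = (1,2) then (0,1) else if p = (2,0) then (1,2) else if p = (2,1) then (1,0) else (1,1), by decide, by decide⟩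

def el17 : Equiv.Perm F3 :=
  ⟨fun p => if p = (0,0) then (1,1) else if p = (0,1) then (0,1) else if p = (0,2) then (2,1) else if p = (1,0) then (1,2) else if p = (1,1) then (0,2) else if p = (1,2) then (2,2) else if p = (2,0) then (1,0) else if p = (2,1) then (0,0) else (2,0),
   fun p => if p = (0,0) then (2,1) else if p = (0,1) then (0,1) else if p = (0,2) then (1,1) else if p = (1,0) then (2,0) else if p = (1,1) then (0,0) else if p = (1,2) then (1,0) else if p = (2,0) then (2,2) else if p = (2,1) then (0,2) else (1,2), by decide, by decide⟩

def el18 : Equiv.Perm F3 :=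
  ⟨fun p => if p = (0,0) then (1,1) else if p = (0,1) then (1,0) else if p = (0,2) then (1,2) else if p = (1,0) then (0,1) else if p = (1,1) then (0,0) else if p = (1,2) then (0,2) else if p = (2,0) then (2,1) else if p = (2,1) then (2,0) else (2,2),
   fun p => if p = (0,0) then (1,1) else if p = (0,1) then (1,0) else if p = (0,2) then (1,2) else if p = (1,0) then (0,1) else if p = (1,1) then (0,0) else if p = (1,2) then (0,2) else if p = (2,0) then (2,1) else if p = (2,1) then (2,0) else (2,2), by decide, by decide⟩

def el19 : Equiv.Perm F3 :=
  ⟨fun p => if p = (0,0) then (1,1) else if p = (0,1) then (2,1) else if p = (0,2) then (0,1) else if p = (1,0) then (1,0) else if p = (1,1) then (2,0) else if p = (1,2) then (0,0) else if p = (2,0) then (1,2) else if p = (2,1) then (2,2) else (0,2),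
   fun p => if p = (0,0) then (1,2) else if p = (0,1) then (0,2) else if p = (0,2) then (2,2) else if p = (1,0) then (1,0) else if p = (1,1) then (0,0) else if p = (1,2) then (2,0) else if p = (2,0) then (1,1) else if p = (2,1) then (0,1) else (2,1), by decide, by decide⟩

def el20 : Equiv.Perm F3 :=
  ⟨fun p => if p = (0,0) then (1,2) else if p = (0,1) then (1,0) else if p = (0,2) then (1,1) else if p = (1,0) then (2,2) else if p = (1,1) then (2,0) else if p = (1,2) then (2,1) else if p = (2,0) then (0,2) else if p = (2,1) then (0,0) else (0,1),
   fun p => if p = (0,0) then (2,1) else if p = (0,1) then (2,2) else if p = (0,2) then (2,0) else if p = (1,0) then (0,1) else if p = (1,1) then (0,2) else if p = (1,2) then (0,0) else if p = (2,0) then (1,1) else if p = (2,1) then (1,2) else (1,0), by decide, by decide⟩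

def el21 : Equiv.Perm F3 :=
  ⟨fun p => if p = (0,0) then (1,2) else if p = (0,1) then (0,2) else if p = (0,2) then (2,2) else if p = (1,0) then (1,0) else if p = (1,1) then (0,0) else if p = (1,2) then (2,0) else if p = (2,0) then (1,1) else if p = (2,1) then (0,1) else (2,1),
   fun p => if p = (0,0) then (1,1) else if p = (0,1) then (2,1) else if p = (0,2) then (0,1) else if p = (1,0) then (1,0) else if p = (1,1) then (2,0) else if p = (1,2) then (0,0) else if p = (2,0) then (1,2) else if p = (2,1) then (2,2) else (0,2), by decide, by decide⟩

def el22 : Equiv.Perm F3 :=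
  ⟨fun p => if p = (0,0) then (1,2) else if p = (0,1) then (1,1) else if p = (0,2) then (1,0) else if p = (1,0) then (0,2) else if p = (1,1) then (0,1) else if p = (1,2) then (0,0) else if p = (2,0) then (2,2) else if p = (2,1) then (2,1) else (2,0),
   fun p => if p = (0,0) then (1,2) else if p = (0,1) then (1,1) else if p = (0,2) then (1,0) else if p = (1,0) then (0,2) else if p = (1,1) then (0,1) else if p = (1,2) then (0,0) else if p = (2,0) then (2,2) else if p = (2,1) then (2,1) else (2,0), by decide, by decide⟩

def el23 : Equiv.Perm F3 :=
  ⟨fun p => if p = (0,0) then (1,2) else if p = (0,1) then (2,2) else if p = (0,2) then (0,2) else if p = (1,0) then (1,1) else if p = (1,1) then (2,1) else if p = (1,2) then (0,1) else if p = (2,0) then (1,0) else if p = (2,1) then (2,0) else (0,0),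
   fun p => if p = (0,0) then (2,2) else if p = (0,1) then (1,2) else if p = (0,2) then (0,2) else if p = (1,0) then (2,0) else if p = (1,1) then (1,0) else if p = (1,2) then (0,0) else if p = (2,0) then (2,1) else if p = (2,1) then (1,1) else (0,1), by decide, by decide⟩

def el24 : Equiv.Perm F3 :=
  ⟨fun p => if p = (0,0) then (2,0) else if p = (0,1) then (2,1) else if p = (0,2) then (2,2) else if p = (1,0) then (0,0) else if p = (1,1) then (0,1) else if p = (1,2) then (0,2) else if p = (2,0) then (1,0) else if p = (2,1) then (1,1) else (1,2),
   fun p => if p = (0,0) then (1,0) else if p = (0,1) then (1,1) else if p = (0,2) then (1,2) else if p = (1,0) then (2,0) else if p = (1,1) then (2,1) else if p = (1,2) then (2,2) else if p = (2,0) then (0,0) else if p = (2,1) then (0,1) else (0,2), by decide, by decide⟩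

def el25 : Equiv.Perm F3 :=
  ⟨fun p => if p = (0,0) then (2,0) else if p = (0,1) then (1,0) else if p = (0,2) then (0,0) else if p = (1,0) then (2,1) else if p = (1,1) then (1,1) else if p = (1,2) then (0,1) else if p = (2,0) then (2,2) else if p = (2,1) then (1,2) else (0,2),
   fun p => if p = (0,0) then (0,2) else if p = (0,1) then (1,2) else if p = (0,2) then (2,2) else if p = (1,0) then (0,1) else if p = (1,1) then (1,1) else if p = (1,2) then (2,1) else if p = (2,0) then (0,0) else if p = (2,1) then (1,0) else (2,0), by decide, by decide⟩

def el26 : Equiv.Perm F3 :=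
  ⟨fun p => if p = (0,0) then (2,0) else if p = (0,1) then (2,2) else if p = (0,2) then (2,1) else if p = (1,0) then (1,0) else if p = (1,1) then (1,2) else if p = (1,2) then (1,1) else if p = (2,0) then (0,0) else if p = (2,1) then (0,2) else (0,1),
   fun p => if p = (0,0) then (2,0) else if p = (0,1) then (2,2) else if p = (0,2) then (2,1) else if p = (1,0) then (1,0) else if p = (1,1) then (1,2) else if p = (1,2) then (1,1) else if p = (2,0) then (0,0) else if p = (2,1) then (0,2) else (0,1), by decide, by decide⟩

def el27 : Equiv.Perm F3 :=
  ⟨fun p => if p = (0,0) then (2,0) else if p = (0,1) then (0,0) else if p = (0,2) then (1,0) else if p = (1,0) then (2,2) else if p = (1,1) then (0,2) else if p = (1,2) then (1,2) else if p = (2,0) then (2,1) else if p = (2,1) then (0,1) else (1,1),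
   fun p => if p = (0,0) then (0,1) else if p = (0,1) then (2,1) else if p = (0,2) then (1,1) else if p = (1,0) then (0,2) else if p = (1,1) then (2,2) else if p = (1,2) then (1,2) else if p = (2,0) then (0,0) else if p = (2,1) then (2,0) else (1,0), by decide, by decide⟩

def el28 : Equiv.Perm F3 :=
  ⟨fun p => if p = (0,0) then (2,1) else if p = (0,1) then (2,2) else if p = (0,2) then (2,0) else if p = (1,0) then (0,1) else if p = (1,1) then (0,2) else if p = (1,2) then (0,0) else if p = (2,0) then (1,1) else if p = (2,1) then (1,2) else (1,0),
   fun p => if p = (0,0) then (1,2) else if p = (0,1) then (1,0) else if p = (0,2) then (1,1) else if p = (1,0) then (2,2) else if p = (1,1) then (2,0) else if p = (1,2) then (2,1) else if p = (2,0) then (0,2) else if p = (2,1) then (0,0) else (0,1), by decide, by decide⟩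

def el29 : Equiv.Perm F3 :=
  ⟨fun p => if p = (0,0) then (2,1) else if p = (0,1) then (1,1) else if p = (0,2) then (0,1) else if p = (1,0) then (2,2) else if p = (1,1) then (1,2) else if p = (1,2) then (0,2) else if p = (2,0) then (2,0) else if p = (2,1) then (1,0) else (0,0),
   fun p => if p = (0,0) then (2,2) else if p = (0,1) then (0,2) else if p = (0,2) then (1,2) else if p = (1,0) then (2,1) else if p = (1,1) then (0,1) else if p = (1,2) then (1,1) else if p = (2,0) then (2,0) else if p = (2,1) then (0,0) else (1,0), by decide, by decide⟩

def el30 : Equiv.Perm F3 :=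
  ⟨fun p => if p = (0,0) then (2,1) else if p = (0,1) then (2,0) else if p = (0,2) then (2,2) else if p = (1,0) then (1,1) else if p = (1,1) then (1,0) else if p = (1,2) then (1,2) else if p = (2,0) then (0,1) else if p = (2,1) then (0,0) else (0,2),
   fun p => if p = (0,0) then (2,1) else if p = (0,1) then (2,0) else if p = (0,2) then (2,2) else if p = (1,0) then (1,1) else if p = (1,1) then (1,0) else if p = (1,2) then (1,2) else if p = (2,0) then (0,1) else if p = (2,1) then (0,0) else (0,2), by decide, by decide⟩

def el31 : Equiv.Perm F3 :=
  ⟨fun p => if p = (0,0) then (2,1) else if p = (0,1) then (0,1) else if p = (0,2) then (1,1) else if p = (1,0) then (2,0) else if p = (1,1) then (0,0) else if p = (1,2) then (1,0) else if p = (2,0) then (2,2) else if p = (2,1) then (0,2) else (1,2),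
   fun p => if p = (0,0) then (1,1) else if p = (0,1) then (0,1) else if p = (0,2) then (2,1) else if p = (1,0) then (1,2) else if p = (1,1) then (0,2) else if p = (1,2) then (2,2) else if p = (2,0) then (1,0) else if p = (2,1) then (0,0) else (2,0), by decide, by decide⟩

def el32 : Equiv.Perm F3 :=
  ⟨fun p => if p = (0,0) then (2,2) else if p = (0,1) then (2,0) else if p = (0,2) then (2,1) else if p = (1,0) then (0,2) else if p = (1,1) then (0,0) else if p = (1,2) then (0,1) else if p = (2,0) then (1,2) else if p = (2,1) then (1,0) else (1,1),
   fun p => if p = (0,0) then (1,1) else if p = (0,1) then (1,2) else if p = (0,2) then (1,0) else if p = (1,0) then (2,1) else if p = (1,1) then (2,2) else if p = (1,2) then (2,0) else if p = (2,0) then (0,1) else if p = (2,1) then (0,2) else (0,0), by decide, by decide⟩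

def el33 : Equiv.Perm F3 :=
  ⟨fun p => if p = (0,0) then (2,2) else if p = (0,1) then (1,2) else if p = (0,2) then (0,2) else if p = (1,0) then (2,0) else if p = (1,1) then (1,0) else if p = (1,2) then (0,0) else if p = (2,0) then (2,1) else if p = (2,1) then (1,1) else (0,1),
   fun p => if p = (0,0) then (1,2) else if p = (0,1) then (2,2) else if p = (0,2) then (0,2) else if p = (1,0) then (1,1) else if p = (1,1) then (2,1) else if p = (1,2) then (0,1) else if p = (2,0) then (1,0) else if p = (2,1) then (2,0) else (0,0), by decide, by decide⟩

def el34 : Equiv.Perm F3 :=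
  ⟨fun p => if p = (0,0) then (2,2) else if p = (0,1) then (2,1) else if p = (0,2) then (2,0) else if p = (1,0) then (1,2) else if p = (1,1) then (1,1) else if p = (1,2) then (1,0) else if p = (2,0) then (0,2) else if p = (2,1) then (0,1) else (0,0),
   fun p => if p = (0,0) then (2,2) else if p = (0,1) then (2,1) else if p = (0,2) then (2,0) else if p = (1,0) then (1,2) else if p = (1,1) then (1,1) else if p = (1,2) then (1,0) else if p = (2,0) then (0,2) else if p = (2,1) then (0,1) else (0,0), by decide, by decide⟩

def el35 : Equiv.Perm F3 :=
  ⟨fun p => if p = (0,0) then (2,2) else if p = (0,1) then (0,2) else if p = (0,2) then (1,2) else if p = (1,0) then (2,1) else if p = (1,1) then (0,1) else if p = (1,2) then (1,1) else if p = (2,0) then (2,0) else if p = (2,1) then (0,0) else (1,0),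
   fun p => if p = (0,0) then (2,1) else if p = (0,1) then (1,1) else if p = (0,2) then (0,1) else if p = (1,0) then (2,2) else if p = (1,1) then (1,2) else if p = (1,2) then (0,2) else if p = (2,0) then (2,0) else if p = (2,1) then (1,0) else (0,0), by decide, by decide⟩

def elems36 : List (Equiv.Perm F3) := [el0, el1, el2, el3, el4, el5, el6, el7, el8, el9, el10, el11, el12, el13, el14, el15, el16, el17, el18, el19, el20, el21, el22, el23, el24, el25, el26, el27, el28, el29, el30, el31, el32, el33, el34, el35]


/-- The same 36 elements in symbolic form. -/
def elemsSym : List (Equiv.Perm F3) :=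
  (List.range 3).flatMap fun a => (List.range 3).flatMap fun b =>
    (List.range 4).map fun c => T1 ^ a * T2 ^ b * JPerm ^ c

lemma elems_eq : elems36 = elemsSym := by decide

lemma mem36 (x : Equiv.Perm F3) (hx : x ∈ elems36) :
    x = el0 ∨ x = el1 ∨ x = el2 ∨ x = el3 ∨ x = el4 ∨ x = el5 ∨ x = el6 ∨ x = el7 ∨ x = el8 ∨
    x = el9 ∨ x = el10 ∨ x = el11 ∨ x = el12 ∨ x = el13 ∨ x = el14 ∨ x = el15 ∨ x = el16 ∨
    x = el17 ∨ x = el18 ∨ x = el19 ∨ x = el20 ∨ x = el21 ∨ x = el22 ∨ x = el23 ∨ x = el24 ∨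
    x = el25 ∨ x = el26 ∨ x = el27 ∨ x = el28 ∨ x = el29 ∨ x = el30 ∨ x = el31 ∨ x = el32 ∨
    x = el33 ∨ x = el34 ∨ x = el35 := by
  simpa only [elems36, List.mem_cons, List.not_mem_nil, or_false] using hx

lemma closT1 : ∀ x ∈ elems36, T1 * x ∈ elems36 := by
  intro x hx
  rcases mem36 x hx with (rfl|rfl|rfl|rfl|rfl|rfl|rfl|rfl|rfl|rfl|rfl|rfl|rfl|rfl|rfl|rfl|rfl|rfl|rfl|rfl|rfl|rfl|rfl|rfl|rfl|rfl|rfl|rfl|rfl|rfl|rfl|rfl|rfl|rfl|rfl|rfl) <;> decide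

lemma closT2 : ∀ x ∈ elems36, T2 * x ∈ elems36 := by
  intro x hx
  rcases mem36 x hx with (rfl|rfl|rfl|rfl|rfl|rfl|rfl|rfl|rfl|rfl|rfl|rfl|rfl|rfl|rfl|rfl|rfl|rfl|rfl|rfl|rfl|rfl|rfl|rfl|rfl|rfl|rfl|rfl|rfl|rfl|rfl|rfl|rfl|rfl|rfl|rfl) <;> decide

lemma closJ : ∀ x ∈ elems36, JPerm * x ∈ elems36 := by
  intro x hx
  rcases mem36 x hx with (rfl|rfl|rfl|rfl|rfl|rfl|rfl|rfl|rfl|rfl|rfl|rfl|rfl|rfl|rfl|rfl|rfl|rfl|rfl|rfl|rfl|rfl|rfl|rfl|rfl|rfl|rfl|rfl|rfl|rfl|rfl|rfl|rfl|rfl|rfl|rfl) <;> decide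

lemma closT1i : ∀ x ∈ elems36, T1⁻¹ * x ∈ elems36 := by
  intro x hx
  rw [show (T1⁻¹ : Equiv.Perm F3) = T1 * T1 from by decide, mul_assoc]
  exact closT1 _ (closT1 x hx)

lemma closT2i : ∀ x ∈ elems36, T2⁻¹ * x ∈ elems36 := by
  intro x hx
  rw [show (T2⁻¹ : Equiv.Perm F3) = T2 * T2 from by decide, mul_assoc]
  exact closT2 _ (closT2 x hx)

lemma closJi : ∀ x ∈ elems36, JPerm⁻¹ * x ∈ elems36 := by
  intro x hx
  rw [show (JPerm⁻¹ : Equiv.Perm F3) = JPerm * (JPerm * JPerm) from by decide, mul_assoc,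
    mul_assoc]
  exact closJ _ (closJ _ (closJ x hx))

lemma model_subset : ∀ x ∈ ModelGroup, x ∈ elems36 := by
  intro x hx
  have hx' : x ∈ Subgroup.closure ({T1, T2, JPerm} : Set (Equiv.Perm F3)) := hx
  induction hx' using Subgroup.closure_induction_left with
  | one => decide
  | mul_left g hg y hy ih =>
    rcases (by simpa using hg : g = T1 ∨ g = T2 ∨ g = JPerm) with rfl | rfl | rfl
    · exact closT1 y (ih hy)
    · exact closT2 y (ih hy)
    · exact closJ y (ih hy)
  | inv_mul_cancel g hg y hy ih =>
    rcases (by simpa using hg : g = T1 ∨ g = T2 ∨ g = JPerm) with rfl | rfl | rfl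
    · exact closT1i y (ih hy)
    · exact closT2i y (ih hy)
    · exact closJi y (ih hy)

lemma elems_subset : ∀ x ∈ elems36, x ∈ ModelGroup := by
  intro x hx
  rw [elems_eq] at hx
  simp only [elemsSym, List.mem_flatMap, List.mem_map, List.mem_range] at hx
  obtain ⟨a, -, b, -, c, -, rfl⟩ := hx
  have h1 : T1 ∈ ModelGroup := Subgroup.subset_closure (by simp)
  have h2 : T2 ∈ ModelGroup := Subgroup.subset_closure (by simp)
  have h3 : JPerm ∈ ModelGroup := Subgroup.subset_closure (by simp)
  exact mul_mem (mul_mem (pow_mem h1 a) (pow_mem h2 b)) (pow_mem h3 c)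

lemma model_carrier : (ModelGroup : Set (Equiv.Perm F3)) = ↑elems36.toFinset := by
  ext x
  simp only [SetLike.mem_coe, Finset.coe_sort_coe, Finset.mem_coe, List.mem_toFinset]
  exact ⟨model_subset x, elems_subset x⟩

lemma card_modelGroup : Nat.card ModelGroup = 36 := by
  have h1 : Nat.card ModelGroup = (ModelGroup : Set (Equiv.Perm F3)).ncard :=
    Nat.card_coe_set_eq _
  rw [h1, model_carrier, Set.ncard_coe_finset]
  decide

lemma closure_eq_map : (Subgroup.closure {s1, s2, s3} : Subgroup (Equiv.Perm X12)) =
    Subgroup.map embHom ModelGroup := by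
  rw [ModelGroup, MonoidHom.map_closure]
  congr 1
  rw [show ({T1, T2, JPerm} : Set (Equiv.Perm F3)) = insert T1 (insert T2 {JPerm}) from rfl,
    Set.image_insert_eq, Set.image_insert_eq, Set.image_singleton,
    embHom_T1, embHom_T2, embHom_T3]

theorem statement15 :
    s1 ∈ M12 ∧ s2 ∈ M12 ∧ s3 ∈ M12 ∧
    Nat.card (Subgroup.closure {s1, s2, s3} : Subgroup (Equiv.Perm X12)) = 36 ∧
    Nonempty ((Subgroup.closure {s1, s2, s3} : Subgroup (Equiv.Perm X12)) ≃* ModelGroup) := by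
  have hA : pA ∈ M12 := Subgroup.subset_closure (by simp [Set.mem_insert_iff])
  have hB : pB ∈ M12 := Subgroup.subset_closure (by simp [Set.mem_insert_iff])
  have hC : pC ∈ M12 := Subgroup.subset_closure (by simp [Set.mem_insert_iff])
  have hD : pD ∈ M12 := Subgroup.subset_closure (by simp [Set.mem_insert_iff])
  refine ⟨?_, ?_, ?_, ?_, ?_⟩
  · have h : s1 = pC*pA*pA*pA*pD*pA*pD*pC := by decide
    rw [h]
    exact mul_mem (mul_mem (mul_mem (mul_mem (mul_mem (mul_mem (mul_mem hC hA) hA) hA) hD) hA)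
      hD) hC
  · have h : s2 = pA*pD*pA*pC*pB*pA*pA*pD*pA*pB*pC*pA*pD := by decide
    rw [h]
    exact mul_mem (mul_mem (mul_mem (mul_mem (mul_mem (mul_mem (mul_mem (mul_mem (mul_mem
      (mul_mem (mul_mem (mul_mem hA hD) hA) hC) hB) hA) hA) hD) hA) hB) hC) hA) hD
  · have h : s3 = pA*pB*pC*pA*pA*pD*pA*pD*pC*pA*pA*pC*pD := by decide
    rw [h]
    exact mul_mem (mul_mem (mul_mem (mul_mem (mul_mem (mul_mem (mul_mem (mul_mem (mul_mem
      (mul_mem (mul_mem (mul_mem hA hB) hC) hA) hA) hD) hA) hD) hC) hA) hA) hC) hD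
  · rw [closure_eq_map, ← card_modelGroup]
    exact Nat.card_congr (ModelGroup.equivMapOfInjective embHom embHom_injective).toEquiv.symm
  · rw [closure_eq_map]
    exact ⟨(ModelGroup.equivMapOfInjective embHom embHom_injective).symm⟩
end
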